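/- Let 𝔤 be the 7-dimensional real nilpotent Lie algebra with basis e_1,…,e_7 whose only nonzero brackets among basis vectors are [e_1,e_2] = −e_3, [e_1,e_3] = e_4, [e_1,e_4] = e_5, [e_2,e_3] = e_5, [e_1,e_5] = e_6, [e_2,e_4] = e_6, [e_2,e_5] = e_7, [e_3,e_4] = e_7 (this bracket satisfies the Jacobi identity). Then for every nonzero real number y, the diagonal metric with diagonal entries (1, 1, 1, y, −y, y², y) is Ricci-flat. -/

import Mathlib

/-!
For a symmetric form, `∑ᵢ G (v i) (u i)` is the same for every basis `v` with dual family `u`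
and every bilinear `G`, so the Ricci expression may be computed from the basis `e` and its dual
`(gᵢ⁻¹ eᵢ)`. It is bilinear in its two arguments, so it vanishes once it vanishes on pairs of basis
vectors, and these 49 values are an explicit computation with the structure constants.
-/

/-- The expression for the Ricci tensor of a metric `B` on a nilpotent Lie algebra,
computed from a basis `v` with metric-dual family `u`. -/
noncomputable def ricci {L : Type} [LieRing L] [LieAlgebra ℝ L] {ι : Type} [Fintype ι]
    (B : LinearMap.BilinForm ℝ L) (v u : ι → L) (x y : L) : ℝ :=
  -(1 / 2 : ℝ) * ∑ i, B ⁅x, v i⁆ ⁅y, u i⁆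
    + (1 / 4 : ℝ) * ∑ i, ∑ j, B ⁅v i, v j⁆ x * B ⁅u i, u j⁆ y

/-- `u` is the metric-dual family of `v` with respect to `B`: `B (v i) (u j) = δ_ij`. -/
def IsDualPair {L : Type} [LieRing L] [LieAlgebra ℝ L] {ι : Type} [Fintype ι]
    [DecidableEq ι] (B : LinearMap.BilinForm ℝ L) (v u : ι → L) : Prop :=
  ∀ i j, B (v i) (u j) = if i = j then (1 : ℝ) else 0

/-- `B` is Ricci-flat: the Ricci tensor vanishes (computed from any basis and
metric-dual family). -/
def RicciFlat {L : Type} [LieRing L] [LieAlgebra ℝ L]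
    (B : LinearMap.BilinForm ℝ L) : Prop :=
  ∀ (ι : Type) [Fintype ι] [DecidableEq ι] (v : Module.Basis ι ℝ L) (u : ι → L),
    IsDualPair B (⇑v) u → ∀ x y, ricci B (⇑v) u x y = 0

open Finset

variable {L : Type} [LieRing L] [LieAlgebra ℝ L]

section RicciForm

variable {ι κ : Type} [Fintype ι]

/-- `(ad ℝ L).flip w` is `p ↦ ⁅p, w⁆`. -/
noncomputable def ricciForm (B : LinearMap.BilinForm ℝ L) (v u : ι → L) :
    LinearMap.BilinForm ℝ L :=
  -(1 / 2 : ℝ) • ∑ i, B.compl₁₂ ((LieAlgebra.ad ℝ L : L →ₗ[ℝ] Module.End ℝ L).flip (v i))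
      ((LieAlgebra.ad ℝ L : L →ₗ[ℝ] Module.End ℝ L).flip (u i))
    + (1 / 4 : ℝ) • ∑ i, ∑ j, (LinearMap.mul ℝ ℝ).compl₁₂ (B ⁅v i, v j⁆) (B ⁅u i, u j⁆)

theorem ricciForm_apply (B : LinearMap.BilinForm ℝ L) (v u : ι → L) (x y : L) :
    ricciForm B v u x y = ricci B v u x y := by
  simp [ricciForm, ricci]

theorem ricci_eq_zero_of_basis {B : LinearMap.BilinForm ℝ L} {v u : ι → L}
    (e : Module.Basis κ ℝ L) (h : ∀ a b, ricci B v u (e a) (e b) = 0) (x y : L) :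
    ricci B v u x y = 0 := by
  have hform : ricciForm B v u = 0 :=
    LinearMap.ext_basis e e fun a b => by simpa [ricciForm_apply] using h a b
  rw [← ricciForm_apply, hform, LinearMap.zero_apply, LinearMap.zero_apply]

end RicciForm

namespace IsDualPair

variable {ι κ : Type} [Fintype ι] [DecidableEq ι] [Fintype κ] [DecidableEq κ]
  {B : LinearMap.BilinForm ℝ L} {v : Module.Basis ι ℝ L} {u : ι → L}

theorem apply_eq_repr (h : IsDualPair B v u) (w : L) (i : ι) : B w (u i) = v.repr w i := by
  unfold IsDualPair at h
  conv_lhs => rw [← v.sum_repr w]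
  simp [h, -Module.Basis.sum_repr]

theorem sum_smul_eq (h : IsDualPair B v u) (w : L) : ∑ i, B w (u i) • v i = w := by
  simp_rw [h.apply_eq_repr]
  exact v.sum_repr w

variable {e : Module.Basis κ ℝ L} {f : κ → L}

theorem sum_bilin_eq (hB : B.IsSymm) (hvu : IsDualPair B v u) (hef : IsDualPair B e f)
    (G : L →ₗ[ℝ] L →ₗ[ℝ] ℝ) : ∑ i, G (v i) (u i) = ∑ a, G (f a) (e a) :=
  calc ∑ i, G (v i) (u i)
      = ∑ i, ∑ a, B (u i) (f a) * G (v i) (e a) := by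
        refine sum_congr rfl fun i _ => ?_
        conv_lhs => rw [← hef.sum_smul_eq (u i)]
        simp [map_sum, map_smul]
    _ = ∑ a, G (∑ i, B (f a) (u i) • v i) (e a) := by
        rw [sum_comm]
        simp [map_sum, map_smul, hB.eq (f _)]
    _ = ∑ a, G (f a) (e a) := by simp_rw [hvu.sum_smul_eq]

theorem sum_mul_eq (hB : B.IsSymm) (hvu : IsDualPair B v u) (hef : IsDualPair B e f)
    (φ ψ : L →ₗ[ℝ] ℝ) : ∑ i, φ (v i) * ψ (u i) = ∑ a, φ (f a) * ψ (e a) :=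
  hvu.sum_bilin_eq hB hef ((LinearMap.mul ℝ ℝ).compl₁₂ φ ψ)

theorem ricci_eq (hB : B.IsSymm) (hvu : IsDualPair B v u) (hef : IsDualPair B e f)
    (x y : L) : ricci B v u x y = ricci B f e x y := by
  have first : ∑ i, B ⁅x, v i⁆ ⁅y, u i⁆ = ∑ a, B ⁅x, f a⁆ ⁅y, e a⁆ :=
    hvu.sum_bilin_eq hB hef (B.compl₁₂ (LieAlgebra.ad ℝ L x) (LieAlgebra.ad ℝ L y))
  have second : ∑ i, ∑ j, B ⁅v i, v j⁆ x * B ⁅u i, u j⁆ y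
      = ∑ a, ∑ b, B ⁅f a, f b⁆ x * B ⁅e a, e b⁆ y := by
    calc ∑ i, ∑ j, B ⁅v i, v j⁆ x * B ⁅u i, u j⁆ y
        = ∑ j, ∑ a, B ⁅f a, v j⁆ x * B ⁅e a, u j⁆ y := by
          rw [sum_comm]
          refine sum_congr rfl fun j _ => ?_
          simpa using hvu.sum_mul_eq hB hef
            ((B.flip x).comp ((LieAlgebra.ad ℝ L : L →ₗ[ℝ] Module.End ℝ L).flip (v j)))
            ((B.flip y).comp ((LieAlgebra.ad ℝ L : L →ₗ[ℝ] Module.End ℝ L).flip (u j)))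
      _ = ∑ a, ∑ b, B ⁅f a, f b⁆ x * B ⁅e a, e b⁆ y := by
          rw [sum_comm]
          refine sum_congr rfl fun a _ => ?_
          simpa using hvu.sum_mul_eq hB hef
            ((B.flip x).comp (LieAlgebra.ad ℝ L (f a))) ((B.flip y).comp (LieAlgebra.ad ℝ L (e a)))
  rw [ricci, ricci, first, second]

end IsDualPair

section Diagonal

variable {ι : Type} {B : LinearMap.BilinForm ℝ L} {g : ι → ℝ}

theorem isSymm_of_diagonal [DecidableEq ι] {e : Module.Basis ι ℝ L}
    (hB : ∀ i j, B (e i) (e j) = if i = j then g i else 0) : B.IsSymm :=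
  (LinearMap.BilinForm.isSymm_iff_basis e).2 fun i j => by
    rw [hB, hB]
    split_ifs <;> simp_all

theorem isDualPair_of_diagonal [Fintype ι] [DecidableEq ι] {e : ι → L}
    (hB : ∀ i j, B (e i) (e j) = if i = j then g i else 0) (hg : ∀ i, g i ≠ 0) :
    IsDualPair B e fun i => (g i)⁻¹ • e i := by
  intro i j
  rw [map_smul, smul_eq_mul, hB]
  split_ifs with h
  · subst h
    exact inv_mul_cancel₀ (hg i)
  · exact mul_zero _

theorem ricci_inv_smul_eq [Fintype ι] (e : ι → L) (x y : L) :
    ricci B (fun i => (g i)⁻¹ • e i) e x y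
      = -(1 / 2) * ∑ i, (g i)⁻¹ * B ⁅x, e i⁆ ⁅y, e i⁆
        + (1 / 4) * ∑ i, ∑ j, (g i)⁻¹ * (g j)⁻¹ * (B ⁅e i, e j⁆ x * B ⁅e i, e j⁆ y) := by
  simp only [ricci, lie_smul, smul_lie, map_smul, LinearMap.smul_apply, smul_eq_mul]
  congr 2
  refine sum_congr rfl fun i _ => sum_congr rfl fun j _ => ?_
  ring

end Diagonal

section Algebra75432

variable (e : Module.Basis (Fin 7) ℝ L)

noncomputable def bracketTable75432 : Matrix (Fin 7) (Fin 7) L :=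
  !![   0, -e 2,  e 3, e 4, e 5, 0, 0;
      e 2,    0,  e 4, e 5, e 6, 0, 0;
     -e 3, -e 4,    0, e 6,   0, 0, 0;
     -e 4, -e 5, -e 6,   0,   0, 0, 0;
     -e 5, -e 6,    0,   0,   0, 0, 0;
        0,    0,    0,   0,   0, 0, 0;
        0,    0,    0,   0,   0, 0, 0]

theorem lie_eq_bracketTable75432
    (h01 : ⁅e 0, e 1⁆ = -e 2) (h02 : ⁅e 0, e 2⁆ = e 3)
    (h03 : ⁅e 0, e 3⁆ = e 4) (h12 : ⁅e 1, e 2⁆ = e 4)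
    (h04 : ⁅e 0, e 4⁆ = e 5) (h13 : ⁅e 1, e 3⁆ = e 5)
    (h14 : ⁅e 1, e 4⁆ = e 6) (h23 : ⁅e 2, e 3⁆ = e 6)
    (hzero : ∀ i j : Fin 7,
      (i, j) ∉ ([(0, 1), (0, 2), (0, 3), (1, 2), (0, 4), (1, 3), (1, 4), (2, 3)] :
        List (Fin 7 × Fin 7)) →
      (j, i) ∉ ([(0, 1), (0, 2), (0, 3), (1, 2), (0, 4), (1, 3), (1, 4), (2, 3)] :
        List (Fin 7 × Fin 7)) →
      ⁅e i, e j⁆ = 0) (i j : Fin 7) :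
    ⁅e i, e j⁆ = bracketTable75432 e i j := by
  fin_cases i <;> fin_cases j <;>
    first
    | exact hzero _ _ (by decide) (by decide)
    | assumption
    | rw [← lie_skew]; simp [*, bracketTable75432]

theorem ricci_diagonal75432_basis_eq_zero {y : ℝ} (hy : y ≠ 0) {B : LinearMap.BilinForm ℝ L}
    (hB : ∀ i j, B (e i) (e j) = if i = j then ![1, 1, 1, y, -y, y ^ 2, y] i else 0)
    (hlie : ∀ i j, ⁅e i, e j⁆ = bracketTable75432 e i j) (a b : Fin 7) :
    ricci B (fun i => (![1, 1, 1, y, -y, y ^ 2, y] i)⁻¹ • e i) e (e a) (e b) = 0 := by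
  simp only [ricci_inv_smul_eq, Fin.sum_univ_seven, hlie, bracketTable75432, Matrix.of_apply,
    Matrix.cons_val', Matrix.cons_val, Matrix.cons_val_fin_one, map_zero, map_neg,
    LinearMap.zero_apply, LinearMap.neg_apply, hB]
  fin_cases a <;> fin_cases b <;> simp [hB] <;> field_simp <;> ring

end Algebra75432

theorem one_parameter_family_ricci_flat_75432_3_general {L : Type} [LieRing L] [LieAlgebra ℝ L]
    (e : Module.Basis (Fin 7) ℝ L)
    (h01 : ⁅e 0, e 1⁆ = -e 2) (h02 : ⁅e 0, e 2⁆ = e 3)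
    (h03 : ⁅e 0, e 3⁆ = e 4) (h12 : ⁅e 1, e 2⁆ = e 4)
    (h04 : ⁅e 0, e 4⁆ = e 5) (h13 : ⁅e 1, e 3⁆ = e 5)
    (h14 : ⁅e 1, e 4⁆ = e 6) (h23 : ⁅e 2, e 3⁆ = e 6)
    (hzero : ∀ i j : Fin 7,
      (i, j) ∉ ([(0, 1), (0, 2), (0, 3), (1, 2), (0, 4), (1, 3), (1, 4), (2, 3)] :
        List (Fin 7 × Fin 7)) →
      (j, i) ∉ ([(0, 1), (0, 2), (0, 3), (1, 2), (0, 4), (1, 3), (1, 4), (2, 3)] :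
        List (Fin 7 × Fin 7)) →
      ⁅e i, e j⁆ = 0) :
    ∀ y : ℝ, y ≠ 0 →
      ∀ B : LinearMap.BilinForm ℝ L,
        (∀ i j, B (e i) (e j) = if i = j then
          ![1, 1, 1, y, -y, y ^ 2, y] i else 0) →
        RicciFlat B := by
  intro y hy B hB ι _ _ v u hvu x z
  have hg : ∀ i, ![1, 1, 1, y, -y, y ^ 2, y] i ≠ 0 := by
    intro i
    fin_cases i <;> simp [hy]
  rw [hvu.ricci_eq (isSymm_of_diagonal hB) (isDualPair_of_diagonal hB hg)]
  exact ricci_eq_zero_of_basis e (ricci_diagonal75432_basis_eq_zero e hy hB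
    (lie_eq_bracketTable75432 e h01 h02 h03 h12 h04 h13 h14 h23 hzero)) x z

/-- On the 7-dimensional nilpotent Lie algebra `75432:3`, the one-parameter family of
diagonal metrics with entries `(1, 1, 1, y, −y, y², y)` is Ricci-flat. -/
theorem one_parameter_family_ricci_flat_75432_3 {L : Type} [LieRing L] [LieAlgebra ℝ L]
    [LieRing.IsNilpotent L]
    (e : Module.Basis (Fin 7) ℝ L)
    (h01 : ⁅e 0, e 1⁆ = -e 2) (h02 : ⁅e 0, e 2⁆ = e 3)
    (h03 : ⁅e 0, e 3⁆ = e 4) (h12 : ⁅e 1, e 2⁆ = e 4)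
    (h04 : ⁅e 0, e 4⁆ = e 5) (h13 : ⁅e 1, e 3⁆ = e 5)
    (h14 : ⁅e 1, e 4⁆ = e 6) (h23 : ⁅e 2, e 3⁆ = e 6)
    (hzero : ∀ i j : Fin 7,
      (i, j) ∉ ([(0, 1), (0, 2), (0, 3), (1, 2), (0, 4), (1, 3), (1, 4), (2, 3)] :
        List (Fin 7 × Fin 7)) →
      (j, i) ∉ ([(0, 1), (0, 2), (0, 3), (1, 2), (0, 4), (1, 3), (1, 4), (2, 3)] :
        List (Fin 7 × Fin 7)) →
      ⁅e i, e j⁆ = 0) :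
    ∀ y : ℝ, y ≠ 0 →
      ∀ B : LinearMap.BilinForm ℝ L,
        (∀ i j, B (e i) (e j) = if i = j then
          ![1, 1, 1, y, -y, y ^ 2, y] i else 0) →
        RicciFlat B :=
  one_parameter_family_ricci_flat_75432_3_general e h01 h02 h03 h12 h04 h13 h14 h23 hzero
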